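/- Let Z be a discrete random variable, φ a function of Z, and suppose P(Y=y | X=x, Z=z) = h(y, x, φ(z)) for some function h (i.e., the outcome model factors through φ). Then Y ⟂ Z | (X, φ(Z)). -/

import Mathlib

open Finset

attribute [local instance] Classical.propDecidable

/-- Probability of an event on a finite outcome space. -/
noncomputable def Pr {Ω : Type*} [Fintype Ω] (p : Ω → ℝ) (E : Ω → Prop) : ℝ :=
  ∑ ω, if E ω then p ω else 0

/-- Conditional probability `P(E | F)`. -/
noncomputable def condPr {Ω : Type*} [Fintype Ω] (p : Ω → ℝ) (E F : Ω → Prop) : ℝ :=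
  Pr p (fun ω => E ω ∧ F ω) / Pr p F

/-- Conditional independence of `A` and `B` given `S`, via factorization of the joint law. -/
def CondIndepOn {Ω α β γ : Type*} [Fintype Ω] (p : Ω → ℝ)
    (A : Ω → α) (B : Ω → β) (S : Ω → γ) : Prop :=
  ∀ a b s,
    Pr p (fun ω => A ω = a ∧ B ω = b ∧ S ω = s) * Pr p (fun ω => S ω = s) =
    Pr p (fun ω => A ω = a ∧ S ω = s) * Pr p (fun ω => B ω = b ∧ S ω = s)

/-! On the event `(X, φ Z) = (x, f)`, conditioning further on `Z = z` gives
`P(Y = y | X = x, Z = z) = h y x f` (or an empty event when `φ z ≠ f`), a conditional law of `Y`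
that does not depend on `z`; summing over `z` shows it is also the law of `Y` given `(X, φ Z)`
alone, which is the factorization defining conditional independence. -/

section Pr

variable {Ω : Type*} [Fintype Ω] (p : Ω → ℝ)

lemma Pr_congr {E E' : Ω → Prop} (hE : ∀ ω, E ω ↔ E' ω) : Pr p E = Pr p E' := by
  simp only [Pr, hE]

lemma Pr_eq_zero_of_forall_not {E : Ω → Prop} (hE : ∀ ω, ¬ E ω) : Pr p E = 0 :=
  Finset.sum_eq_zero fun ω _ => if_neg (hE ω)

lemma Pr_eq_sum_Pr_and {β : Type*} [Fintype β] (B : Ω → β) (E : Ω → Prop) :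
    Pr p E = ∑ b, Pr p (fun ω => B ω = b ∧ E ω) := by
  simp only [Pr]
  rw [Finset.sum_comm]
  refine Finset.sum_congr rfl fun ω _ => ?_
  by_cases hE : E ω <;> simp [hE]

lemma Pr_and_eq_mul_of_condPr_eq {E F : Ω → Prop} {c : ℝ} (hF : 0 < Pr p F)
    (hc : condPr p E F = c) : Pr p (fun ω => E ω ∧ F ω) = c * Pr p F :=
  (div_eq_iff hF.ne').mp hc

end Pr

theorem condIndepOn_of_Pr_eq_mul {Ω α β γ : Type*} [Fintype Ω] [Fintype β] (p : Ω → ℝ)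
    (A : Ω → α) (B : Ω → β) (S : Ω → γ) (g : α → γ → ℝ)
    (hg : ∀ a b s, Pr p (fun ω => A ω = a ∧ B ω = b ∧ S ω = s) =
      g a s * Pr p (fun ω => B ω = b ∧ S ω = s)) :
    CondIndepOn p A B S := by
  have hmarg : ∀ a s, Pr p (fun ω => A ω = a ∧ S ω = s) = g a s * Pr p (fun ω => S ω = s) := by
    intro a s
    rw [Pr_eq_sum_Pr_and p B, Pr_eq_sum_Pr_and p B, Finset.mul_sum]
    refine Finset.sum_congr rfl fun b _ => ?_
    rw [← hg]
    exact Pr_congr p fun ω => by tauto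
  intro a b s
  rw [hg, hmarg]
  ring

theorem stmt19_general {Ω 𝓧 𝓨 𝓩 F : Type*} [Fintype Ω] [Fintype 𝓩]
    (p : Ω → ℝ)
    (X : Ω → 𝓧) (Y : Ω → 𝓨) (Z : Ω → 𝓩) (φ : 𝓩 → F)
    (h : 𝓨 → 𝓧 → F → ℝ)
    (hpos : ∀ x z, 0 < Pr p (fun ω => X ω = x ∧ Z ω = z))
    (hmodel : ∀ (y : 𝓨) (x : 𝓧) (z : 𝓩),
      condPr p (fun ω => Y ω = y) (fun ω => X ω = x ∧ Z ω = z) = h y x (φ z)) :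
    CondIndepOn p Y Z (fun ω => (X ω, φ (Z ω))) := by
  refine condIndepOn_of_Pr_eq_mul p Y Z _ (fun y s => h y s.1 s.2) ?_
  rintro y z ⟨x, f⟩
  by_cases hf : φ z = f
  · subst hf
    have hevent : ∀ ω, Z ω = z ∧ (X ω, φ (Z ω)) = (x, φ z) ↔ X ω = x ∧ Z ω = z := by
      refine fun ω => ⟨fun ⟨hz, hs⟩ => ⟨(Prod.mk.inj hs).1, hz⟩, ?_⟩
      rintro ⟨rfl, rfl⟩
      exact ⟨rfl, rfl⟩
    rw [Pr_congr p fun ω => and_congr_right fun _ => hevent ω, Pr_congr p hevent]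
    exact Pr_and_eq_mul_of_condPr_eq p (hpos x z) (hmodel y x z)
  · have hempty : ∀ ω, ¬ (Z ω = z ∧ (X ω, φ (Z ω)) = (x, f)) := by
      rintro ω ⟨rfl, hs⟩
      exact hf (Prod.mk.inj hs).2
    rw [Pr_eq_zero_of_forall_not p fun ω hω => hempty ω hω.2, Pr_eq_zero_of_forall_not p hempty,
      mul_zero]

/-- If the outcome model factors through `φ`, i.e.
`P(Y=y | X=x, Z=z) = h(y, x, φ z)`, then `Y ⟂ Z | (X, φ(Z))`. -/
theorem stmt19 {Ω 𝓧 𝓨 𝓩 F : Type*} [Fintype Ω] [Fintype 𝓩]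
    (p : Ω → ℝ) (hp : ∀ ω, 0 ≤ p ω) (hsum : ∑ ω, p ω = 1)
    (X : Ω → 𝓧) (Y : Ω → 𝓨) (Z : Ω → 𝓩) (φ : 𝓩 → F)
    (h : 𝓨 → 𝓧 → F → ℝ)
    (hpos : ∀ x z, 0 < Pr p (fun ω => X ω = x ∧ Z ω = z))
    (hmodel : ∀ (y : 𝓨) (x : 𝓧) (z : 𝓩),
      condPr p (fun ω => Y ω = y) (fun ω => X ω = x ∧ Z ω = z) = h y x (φ z)) :
    CondIndepOn p Y Z (fun ω => (X ω, φ (Z ω))) :=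
  stmt19_general p X Y Z φ h hpos hmodel
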